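/- Let N ≥ 1 be an integer and p a prime with p > 2N. Then for every residually nilpotent x ∈ gl(N,ℤ_p) one has exp x ≡ Σ_{i=0}^{p−1} x^i / i! (mod p), and for every residually unipotent u ∈ GL(N,ℤ_p) one has log u ≡ −Σ_{i=1}^{p−1} (1−u)^i / i (mod p). (In other words, modulo p the maps exp and log agree with the truncated exponential exp^{(p)} and truncated logarithm log^{(p)}, whose coefficients 1/i! for i < p and 1/i for 1 ≤ i < p lie in ℤ_p.) -/

import Mathlib

/-- The exponential series `∑ zᵏ/k!` of a square matrix over `ℚ_[p]`. -/
noncomputable def matExp {p : ℕ} [Fact p.Prime] {N : ℕ}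
    (z : Matrix (Fin N) (Fin N) ℚ_[p]) : Matrix (Fin N) (Fin N) ℚ_[p] :=
  ∑' k : ℕ, ((k.factorial : ℚ_[p]))⁻¹ • z ^ k

/-- The logarithm series `-∑_{k ≥ 1} (1 - z)ᵏ/k` of a square matrix over `ℚ_[p]`. -/
noncomputable def matLog {p : ℕ} [Fact p.Prime] {N : ℕ}
    (z : Matrix (Fin N) (Fin N) ℚ_[p]) : Matrix (Fin N) (Fin N) ℚ_[p] :=
  -∑' k : ℕ, ((k : ℚ_[p]))⁻¹ • (1 - z) ^ k

/-- The coefficient-wise coercion of a matrix over `ℤ_[p]` to a matrix over `ℚ_[p]`. -/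
def matQ {p : ℕ} [Fact p.Prime] {N : ℕ}
    (x : Matrix (Fin N) (Fin N) ℤ_[p]) : Matrix (Fin N) (Fin N) ℚ_[p] :=
  x.map (fun a => (a : ℚ_[p]))

/-- `x ∈ gl(N, ℤ_[p])` is residually nilpotent. -/
def ResNilp {p : ℕ} [Fact p.Prime] {N : ℕ} (x : Matrix (Fin N) (Fin N) ℤ_[p]) : Prop :=
  ∃ m : ℕ, 1 ≤ m ∧ ∀ i j, (p : ℤ_[p]) ∣ (x ^ m) i j

/-- `u` is a residually unipotent element of `GL(N, ℤ_[p])`. -/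
def ResUnip {p : ℕ} [Fact p.Prime] {N : ℕ} (u : Matrix (Fin N) (Fin N) ℤ_[p]) : Prop :=
  IsUnit u ∧ ∃ m : ℕ, ∀ i j, (p : ℤ_[p]) ∣ (u ^ (p ^ m) - 1) i j

open Finset Filter

set_option linter.unusedSectionVars false

section Aux

variable {p : ℕ} [hpp : Fact p.Prime] {N : ℕ}

lemma matQ_eq (x : Matrix (Fin N) (Fin N) ℤ_[p]) :
    matQ x = (PadicInt.Coe.ringHom (p := p)).mapMatrix x := rfl

lemma matQ_pow (x : Matrix (Fin N) (Fin N) ℤ_[p]) (k : ℕ) :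
    matQ (x ^ k) = (matQ x) ^ k := by
  rw [matQ_eq, matQ_eq, map_pow]

lemma matQ_one_sub (u : Matrix (Fin N) (Fin N) ℤ_[p]) :
    matQ (1 - u) = 1 - matQ u := by
  rw [matQ_eq, matQ_eq, map_sub, map_one]

lemma arith1 (hN : 0 < N) (hp2 : 2 * N < p) {k v : ℕ} (hk : p ≤ k) (hv : 2 * N * v ≤ k) :
    v + 1 ≤ k / N := by
  rw [Nat.le_div_iff_mul_le hN]
  rcases Nat.eq_zero_or_pos v with rfl | hv1
  · omega
  · have h1 : (v + 1) * N ≤ 2 * N * v := by nlinarith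
    omega

lemma arith2 (hN : 0 < N) {k v : ℕ} (hv : 2 * N * v ≤ k) :
    v + k / (4 * N) ≤ k / N := by
  rw [Nat.le_div_iff_mul_le hN, add_mul]
  have h1 : v * N ≤ k / 2 := by
    rw [Nat.le_div_iff_mul_le (by norm_num)]
    nlinarith
  have h2 : k / (4 * N) * N ≤ k / 4 := by
    rw [← Nat.div_div_eq_div_mul]
    exact Nat.div_mul_le_self _ _
  have h3 : k / 2 + k / 4 ≤ k := by omega
  omega

end Aux

set_option linter.unusedSectionVars false

section Aux2
variable {p : ℕ} [hpp : Fact p.Prime] {N : ℕ}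

lemma val_fact_bound (hp2 : 2 * N < p) (k : ℕ) :
    2 * N * padicValNat p (k.factorial) ≤ k := by
  have leg := sub_one_mul_padicValNat_factorial (p := p) k
  have h1 : 2 * N * padicValNat p (k.factorial) ≤ (p - 1) * padicValNat p (k.factorial) :=
    Nat.mul_le_mul_right _ (by omega)
  omega

lemma val_nat_bound (hp2 : 2 * N < p) (k : ℕ) :
    2 * N * padicValNat p k ≤ k := by
  rcases Nat.eq_zero_or_pos k with rfl | hk
  · simp
  set v := padicValNat p k with hv
  have hd : p ^ v ∣ k := pow_padicValNat_dvd
  have hpk : p ^ v ≤ k := Nat.le_of_dvd hk hd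
  have h1 : 2 * N * v + 1 ≤ (2 * N + 1) ^ v := by
    clear hd hpk hv
    induction v with
    | zero => simp
    | succ n ih =>
      have h : (2 * N * n + 1) * (2 * N + 1) = 2 * N * (n + 1) + 1 + 4 * (N * N * n) := by ring
      have h2 := Nat.mul_le_mul_right (2 * N + 1) ih
      rw [pow_succ]
      omega
  have h2 : (2 * N + 1) ^ v ≤ p ^ v := Nat.pow_le_pow_left (by omega) v
  omega

lemma norm_inv_factorial_le (k : ℕ) :
    ‖((k.factorial : ℚ_[p]))⁻¹‖ ≤ (p : ℝ) ^ (padicValNat p k.factorial : ℤ) := by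
  have h0 : (k.factorial : ℚ_[p]) ≠ 0 := Nat.cast_ne_zero.2 k.factorial_ne_zero
  rw [norm_inv, Padic.norm_eq_zpow_neg_valuation h0, Padic.valuation_natCast, ← zpow_neg, neg_neg]

lemma norm_inv_natCast_le (k : ℕ) :
    ‖((k : ℚ_[p]))⁻¹‖ ≤ (p : ℝ) ^ (padicValNat p k : ℤ) := by
  rcases Nat.eq_zero_or_pos k with rfl | hk
  · simp
  have h0 : (k : ℚ_[p]) ≠ 0 := Nat.cast_ne_zero.2 hk.ne'
  rw [norm_inv, Padic.norm_eq_zpow_neg_valuation h0, Padic.valuation_natCast, ← zpow_neg, neg_neg]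

end Aux2

section Aux3
variable {p : ℕ} [hpp : Fact p.Prime] {N : ℕ}

lemma toZMod_zero_iff (a : ℤ_[p]) : PadicInt.toZMod a = 0 ↔ (p : ℤ_[p]) ∣ a := by
  rw [← RingHom.mem_ker, PadicInt.ker_toZMod, PadicInt.maximalIdeal_eq_span_p,
    Ideal.mem_span_singleton]

lemma exists_smul_of_nilpotent_mod (hN : 0 < N) {x : Matrix (Fin N) (Fin N) ℤ_[p]}
    (h : IsNilpotent ((PadicInt.toZMod (p := p)).mapMatrix x)) :
    ∃ y : Matrix (Fin N) (Fin N) ℤ_[p], x ^ N = (p : ℤ_[p]) • y := by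
  haveI : Nonempty (Fin N) := ⟨⟨0, hN⟩⟩
  set M := (PadicInt.toZMod (p := p)).mapMatrix x with hM
  have hchar : M.charpoly = Polynomial.X ^ (Fintype.card (Fin N)) := by
    rw [← sub_eq_zero]
    exact (Matrix.isNilpotent_charpoly_sub_pow_of_isNilpotent h).eq_zero
  have hMN : M ^ N = 0 := by
    have h2 := Matrix.aeval_self_charpoly M
    rw [hchar, map_pow, Polynomial.aeval_X, Fintype.card_fin] at h2
    exact h2
  have hdvd : ∀ i j, (p : ℤ_[p]) ∣ (x ^ N) i j := by
    intro i j
    rw [← toZMod_zero_iff]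
    have h3 : (M ^ N) i j = 0 := by rw [hMN]; rfl
    rw [hM, ← map_pow] at h3
    exact h3
  refine ⟨Matrix.of fun i j => (hdvd i j).choose, ?_⟩
  ext i j
  rw [Matrix.smul_apply, smul_eq_mul]
  exact (hdvd i j).choose_spec

lemma resNilp_pow (hN : 0 < N) {x : Matrix (Fin N) (Fin N) ℤ_[p]} (h : ResNilp x) :
    ∃ y : Matrix (Fin N) (Fin N) ℤ_[p], x ^ N = (p : ℤ_[p]) • y := by
  obtain ⟨m, _, hm⟩ := h
  refine exists_smul_of_nilpotent_mod hN ⟨m, ?_⟩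
  rw [← map_pow]
  ext i j
  rw [RingHom.mapMatrix_apply, Matrix.map_apply, Matrix.zero_apply, toZMod_zero_iff]
  exact hm i j

lemma resUnip_pow (hN : 0 < N) (hp2 : 2 * N < p) {u : Matrix (Fin N) (Fin N) ℤ_[p]}
    (h : ResUnip u) :
    ∃ y : Matrix (Fin N) (Fin N) ℤ_[p], (1 - u) ^ N = (p : ℤ_[p]) • y := by
  haveI : Nonempty (Fin N) := ⟨⟨0, hN⟩⟩
  obtain ⟨-, m, hm⟩ := h
  refine exists_smul_of_nilpotent_mod hN ⟨p ^ m, ?_⟩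
  rw [map_sub, map_one]
  have hu : ((PadicInt.toZMod (p := p)).mapMatrix u) ^ (p ^ m) = 1 := by
    have h3 : (PadicInt.toZMod (p := p)).mapMatrix (u ^ (p ^ m) - 1) = 0 := by
      ext i j
      rw [RingHom.mapMatrix_apply, Matrix.map_apply, Matrix.zero_apply, toZMod_zero_iff]
      exact hm i j
    rw [map_sub, map_one, map_pow, sub_eq_zero] at h3
    exact h3
  rw [sub_pow_char_pow_of_commute p m (Commute.one_left _), hu, one_pow, sub_self]

end Aux3

section Aux4
variable {p : ℕ} [hpp : Fact p.Prime] {N : ℕ}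

lemma entry_norm_le (hN : 0 < N) {x y : Matrix (Fin N) (Fin N) ℤ_[p]}
    (hxy : x ^ N = (p : ℤ_[p]) • y) (k : ℕ) (i j : Fin N) :
    ‖(matQ x ^ k) i j‖ ≤ (p : ℝ) ^ (-(k / N : ℕ) : ℤ) := by
  have hk : x ^ k = (p : ℤ_[p]) ^ (k / N) • (y ^ (k / N) * x ^ (k % N)) := by
    conv_lhs => rw [← Nat.div_add_mod k N]
    rw [pow_add, pow_mul, hxy, smul_pow, smul_mul_assoc]
  have he : (matQ x ^ k) i j = (((x ^ k) i j : ℤ_[p]) : ℚ_[p]) := by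
    rw [← matQ_pow]; rfl
  rw [he, hk, Matrix.smul_apply, smul_eq_mul, PadicInt.coe_mul, norm_mul]
  have h1 : ‖(((p : ℤ_[p]) ^ (k / N) : ℤ_[p]) : ℚ_[p])‖ = (p : ℝ) ^ (-(k / N : ℕ) : ℤ) := by
    rw [PadicInt.coe_pow, PadicInt.coe_natCast, norm_pow, Padic.norm_p, zpow_neg,
      zpow_natCast, ← inv_pow]
  have h2 : ‖(((y ^ (k / N) * x ^ (k % N)) i j : ℤ_[p]) : ℚ_[p])‖ ≤ 1 := by
    rw [← PadicInt.norm_def]; exact PadicInt.norm_le_one _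
  calc ‖(((p : ℤ_[p]) ^ (k / N) : ℤ_[p]) : ℚ_[p])‖ * ‖(((y ^ (k / N) * x ^ (k % N)) i j : ℤ_[p]) : ℚ_[p])‖
      ≤ (p : ℝ) ^ (-(k / N : ℕ) : ℤ) * 1 := by
        rw [h1]; exact mul_le_mul_of_nonneg_left h2 (zpow_nonneg (Nat.cast_nonneg p) _)
    _ = _ := mul_one _

lemma master (hN : 0 < N) (hp2 : 2 * N < p)
    {x y : Matrix (Fin N) (Fin N) ℤ_[p]} (hxy : x ^ N = (p : ℤ_[p]) • y)
    (c : ℕ → ℚ_[p]) (v : ℕ → ℕ)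
    (hc : ∀ k, ‖c k‖ ≤ (p : ℝ) ^ (v k : ℤ))
    (hv : ∀ k, 2 * N * v k ≤ k) (i j : Fin N) :
    ‖(∑' k : ℕ, c k • matQ x ^ k) i j - (∑ k ∈ Finset.range p, c k • matQ x ^ k) i j‖
      ≤ ((p : ℝ))⁻¹ := by
  set f : ℕ → Matrix (Fin N) (Fin N) ℚ_[p] := fun k => c k • matQ x ^ k with hf
  have hp0 : (0 : ℝ) < p := by exact_mod_cast hpp.out.pos
  have hp1 : (1 : ℝ) < p := by exact_mod_cast hpp.out.one_lt
  have hterm : ∀ (k : ℕ) (i j : Fin N),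
      ‖f k i j‖ ≤ (p : ℝ) ^ ((v k : ℤ) - (k / N : ℕ)) := by
    intro k i j
    rw [hf]
    show ‖(c k • matQ x ^ k) i j‖ ≤ _
    rw [Matrix.smul_apply, smul_eq_mul, norm_mul, sub_eq_add_neg, zpow_add₀ hp0.ne']
    exact mul_le_mul (hc k) (entry_norm_le hN hxy k i j) (norm_nonneg _) (zpow_nonneg hp0.le _)
  have hsmall : ∀ (k : ℕ) (i j : Fin N), ‖f k i j‖ ≤ ((p : ℝ)⁻¹) ^ (k / (4 * N)) := by
    intro k i j
    refine (hterm k i j).trans ?_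
    rw [inv_pow, ← zpow_natCast, ← zpow_neg]
    apply zpow_le_zpow_right₀ hp1.le
    have := arith2 hN (hv k)
    omega
  have hsum_e : ∀ (i j : Fin N), Summable fun k => f k i j := by
    intro i j
    apply NonarchimedeanAddGroup.summable_of_tendsto_cofinite_zero
    rw [Nat.cofinite_eq_atTop]
    apply squeeze_zero_norm (fun k => hsmall k i j)
    have h1 : Filter.Tendsto (fun k : ℕ => k / (4 * N)) Filter.atTop Filter.atTop := by
      apply Filter.tendsto_atTop_atTop.mpr
      intro b
      refine ⟨b * (4 * N), fun a ha => ?_⟩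
      rw [Nat.le_div_iff_mul_le (by omega)]
      omega
    exact (tendsto_pow_atTop_nhds_zero_of_lt_one (inv_nonneg.2 hp0.le)
      (inv_lt_one_of_one_lt₀ hp1)).comp h1
  have hsumf : Summable f := Pi.summable.mpr fun a => Pi.summable.mpr fun b => hsum_e a b
  have happ : (∑' k : ℕ, f k) i j = ∑' k : ℕ, f k i j := by
    erw [tsum_apply hsumf, tsum_apply (Pi.summable.mp hsumf i)]
  have hsplit : ∑' k : ℕ, f k i j - ∑ k ∈ Finset.range p, f k i j = ∑' k : ℕ, f (k + p) i j := by
    rw [← Summable.sum_add_tsum_nat_add p (hsum_e i j)]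
    ring
  rw [show (∑ k ∈ Finset.range p, c k • matQ x ^ k) i j = ∑ k ∈ Finset.range p, f k i j from
    Matrix.sum_apply i j _ _, happ, hsplit]
  apply IsUltrametricDist.norm_tsum_le_of_forall_le_of_nonneg (inv_nonneg.2 hp0.le)
  intro k
  refine (hterm (k + p) i j).trans ?_
  rw [show ((p : ℝ))⁻¹ = (p : ℝ) ^ (-1 : ℤ) from (zpow_neg_one _).symm]
  apply zpow_le_zpow_right₀ hp1.le
  have := arith1 hN hp2 (Nat.le_add_left p k) (hv (k + p))
  omega

end Aux4


/-- **Lemma (exp and log agree with their truncations modulo p).**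
Let `N ≥ 1` and `p > 2N`. For `x ∈ gl(N, ℤ_[p])` residually nilpotent,
`exp x ≡ ∑_{i<p} xⁱ/i! (mod p)`; for `u ∈ GL(N, ℤ_[p])` residually unipotent,
`log u ≡ -∑_{1 ≤ i ≤ p-1} (1-u)ⁱ/i (mod p)`. The occurring coefficients `1/i!` (`i < p`)
and `1/i` (`1 ≤ i < p`) lie in `ℤ_[p]`. -/
theorem stmt_9 (N : ℕ) (hN : 1 ≤ N) (p : ℕ) [Fact p.Prime] (hp : 2 * N < p) :
    (∀ i : ℕ, i < p → ‖((i.factorial : ℚ_[p]))⁻¹‖ ≤ 1) ∧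
    (∀ i : ℕ, 1 ≤ i → i < p → ‖((i : ℚ_[p]))⁻¹‖ ≤ 1) ∧
    (∀ x : Matrix (Fin N) (Fin N) ℤ_[p], ResNilp x →
      ∀ i j, ‖matExp (matQ x) i j
        - (∑ k ∈ Finset.range p, ((k.factorial : ℚ_[p]))⁻¹ • (matQ x) ^ k) i j‖
          ≤ ((p : ℝ))⁻¹) ∧
    (∀ u : Matrix (Fin N) (Fin N) ℤ_[p], ResUnip u →
      ∀ i j, ‖matLog (matQ u) i j
        - (-∑ k ∈ Finset.Icc 1 (p - 1), ((k : ℚ_[p]))⁻¹ • (1 - matQ u) ^ k) i j‖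
          ≤ ((p : ℝ))⁻¹) := by
  have hN0 : 0 < N := hN
  refine ⟨?_, ?_, ?_, ?_⟩
  · intro i hi
    have hv : padicValNat p i.factorial = 0 := by
      apply padicValNat.eq_zero_of_not_dvd
      intro hd
      exact absurd ((Nat.Prime.dvd_factorial (Fact.out)).mp hd) (not_le.2 hi)
    have := norm_inv_factorial_le (p := p) i
    rwa [hv, Nat.cast_zero, zpow_zero] at this
  · intro i h1 hi
    have hv : padicValNat p i = 0 := by
      apply padicValNat.eq_zero_of_not_dvd
      intro hd
      exact absurd (Nat.le_of_dvd h1 hd) (not_le.2 hi)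
    have := norm_inv_natCast_le (p := p) i
    rwa [hv, Nat.cast_zero, zpow_zero] at this
  · intro x hx i j
    obtain ⟨y, hy⟩ := resNilp_pow hN0 hx
    unfold matExp
    exact master hN0 hp hy _ _ (fun k => norm_inv_factorial_le k)
      (fun k => val_fact_bound hp k) i j
  · intro u hu i j
    obtain ⟨y, hy⟩ := resUnip_pow hN0 hp hu
    unfold matLog
    rw [← matQ_one_sub u]
    have hIcc : ∑ k ∈ Finset.Icc 1 (p - 1), ((k : ℚ_[p]))⁻¹ • (matQ (1 - u)) ^ k
        = ∑ k ∈ Finset.range p, ((k : ℚ_[p]))⁻¹ • (matQ (1 - u)) ^ k := by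
      apply Finset.sum_subset
      · intro k hk
        simp only [Finset.mem_Icc] at hk
        simp only [Finset.mem_range]
        have hp1 : 0 < p := Fact.out (p := p.Prime) |>.pos
        exact lt_of_le_of_lt hk.2 (Nat.sub_lt hp1 Nat.one_pos)
      · intro k hk hnk
        have hkr : k < p := Finset.mem_range.mp hk
        have hk0 : k = 0 := by
          simp only [Finset.mem_Icc, not_and, not_le] at hnk
          by_contra h
          have := Fact.out (p := p.Prime) |>.pos
          omega
      
        subst hk0
        simp
    rw [hIcc, Matrix.neg_apply, Matrix.neg_apply, neg_sub_neg, norm_sub_rev]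
    exact master hN0 hp hy _ _ (fun k => norm_inv_natCast_le k)
      (fun k => val_nat_bound hp k) i j
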